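/- arXiv:2107.13853 — 3 statements merged into one kernel-verified Lean document; each statement's English description precedes it below -/
import Mathlib

section
/- Let g : ℝⁿ → ℝᵐ be smooth and let q : [0,1] → ℝⁿ and λ : [0,1] → ℝᵐ be smooth. For every smooth variation v : [0,1] → ℝⁿ with v(0) = 0 = v(1) and every smooth w : [0,1] → ℝᵐ, the derivative at ε = 0 of the map ε ↦ S̄(q + εv, λ + εw) exists and equals ∫₀¹ ( −⟨q̈(t) + g'(q(t))ᵀ λ(t), v(t)⟩ − ⟨g(q(t)), w(t)⟩ ) dt, where q̈ denotes the second derivative of q. -/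
open scoped RealInnerProductSpace

/-!
Differentiating under the integral sign, which is legitimate because the `ε`-derivative of the
integrand is jointly continuous in `(ε, t)` and hence bounded on `[-1, 1] × [0, 1]`, the derivative
at `ε = 0` is `∫₀¹ ⟪q̇, v̇⟫ - ⟪g'(q) v, λ⟫ - ⟪g(q), w⟫`. Integrating `⟪q̇, v̇⟫` by parts, with the
boundary term `⟪q̇, v⟫` killed by `v 0 = 0 = v 1`, and moving `g'(q)` across the inner product as
its adjoint gives the stated integrand.
-/

/-- The extended functional `S̄(q,λ) = ∫₀¹ ( ½‖q̇(t)‖² − ⟨g(q(t)), λ(t)⟩ ) dt`. -/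
noncomputable def Sbar {n m : ℕ} (g : EuclideanSpace ℝ (Fin n) → EuclideanSpace ℝ (Fin m))
    (q : ℝ → EuclideanSpace ℝ (Fin n)) (lam : ℝ → EuclideanSpace ℝ (Fin m)) : ℝ :=
  ∫ t in (0:ℝ)..1, ((1 / 2) * ‖deriv q t‖ ^ 2 - ⟪g (q t), lam t⟫)

theorem hasDerivAt_intervalIntegral_of_continuous {E : Type*} [NormedAddCommGroup E]
    [NormedSpace ℝ E] {F F' : ℝ → ℝ → E} {a b x₀ : ℝ}
    (hF : ∀ x, Continuous (F x)) (hF' : Continuous (Function.uncurry F'))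
    (h_diff : ∀ x t, HasDerivAt (fun x => F x t) (F' x t) x) :
    HasDerivAt (fun x => ∫ t in a..b, F x t) (∫ t in a..b, F' x₀ t) x₀ := by
  obtain ⟨C, hC⟩ := ((isCompact_closedBall x₀ 1).prod (isCompact_uIcc (a := a) (b := b)))
    |>.exists_bound_of_continuousOn hF'.continuousOn
  refine (intervalIntegral.hasDerivAt_integral_of_dominated_loc_of_deriv_le
    (bound := fun _ => C) (Metric.ball_mem_nhds x₀ one_pos)
    (.of_forall fun x => (hF x).aestronglyMeasurable)
    ((hF x₀).intervalIntegrable a b)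
    (hF'.comp (Continuous.prodMk_right x₀)).aestronglyMeasurable
    (.of_forall fun t ht x hx =>
      hC (x, t) ⟨Metric.ball_subset_closedBall hx, Set.uIoc_subset_uIcc ht⟩)
    intervalIntegrable_const
    (.of_forall fun t _ x _ => h_diff x t)).2

section InnerProductSpace

variable {E F : Type*} [NormedAddCommGroup E] [InnerProductSpace ℝ E]
  [NormedAddCommGroup F] [InnerProductSpace ℝ F]

theorem integral_deriv_inner_eq_sub {u v u' v' : ℝ → E} {a b : ℝ}
    (hu : ∀ t, HasDerivAt u (u' t) t) (hv : ∀ t, HasDerivAt v (v' t) t)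
    (hu' : Continuous u') (hv' : Continuous v') :
    ∫ t in a..b, (⟪u' t, v t⟫ + ⟪u t, v' t⟫) = ⟪u b, v b⟫ - ⟪u a, v a⟫ := by
  have hu_cont : Continuous u := continuous_iff_continuousAt.2 fun t => (hu t).continuousAt
  have hv_cont : Continuous v := continuous_iff_continuousAt.2 fun t => (hv t).continuousAt
  have hcont : Continuous fun t => ⟪u' t, v t⟫ + ⟪u t, v' t⟫ := by fun_prop
  refine intervalIntegral.integral_eq_sub_of_hasDerivAt (f := fun t => ⟪u t, v t⟫)
    (fun t _ => ?_) (hcont.intervalIntegrable a b)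
  simpa only [add_comm] using (hu t).inner ℝ (hv t)

noncomputable def lagrangian (g : E → F) (x p : E) (l : F) : ℝ :=
  1 / 2 * ‖p‖ ^ 2 - ⟪g x, l⟫

theorem hasDerivAt_const_add_smul {G : Type*} [NormedAddCommGroup G] [NormedSpace ℝ G]
    (c d : G) (ε : ℝ) : HasDerivAt (fun ε : ℝ => c + ε • d) d ε := by
  simpa using ((hasDerivAt_id ε).smul_const d).const_add c

theorem hasDerivAt_lagrangian_add_smul {g : E → F} (hg : Differentiable ℝ g)
    (x y p p' : E) (l z : F) (ε : ℝ) :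
    HasDerivAt (fun ε : ℝ => lagrangian g (x + ε • y) (p + ε • p') (l + ε • z))
      (⟪p + ε • p', p'⟫ - ⟪fderiv ℝ g (x + ε • y) y, l + ε • z⟫ - ⟪g (x + ε • y), z⟫) ε := by
  have hgx := (hg (x + ε • y)).hasFDerivAt.comp_hasDerivAt ε (hasDerivAt_const_add_smul x y ε)
  refine (((hasDerivAt_const_add_smul p p' ε).norm_sq.const_mul (1 / 2 : ℝ)).sub
    (hgx.inner ℝ (hasDerivAt_const_add_smul l z ε))).congr_deriv ?_
  simp only [Function.comp_apply]
  ring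

theorem hasDerivAt_integral_lagrangian_add_smul {g : E → F} (hg : ContDiff ℝ 1 g)
    {x y p p' : ℝ → E} {l z : ℝ → F} (hx : Continuous x) (hy : Continuous y)
    (hp : Continuous p) (hp' : Continuous p') (hl : Continuous l) (hz : Continuous z)
    (a b : ℝ) :
    HasDerivAt
      (fun ε : ℝ => ∫ t in a..b, lagrangian g (x t + ε • y t) (p t + ε • p' t) (l t + ε • z t))
      (∫ t in a..b, (⟪p t, p' t⟫ - ⟪fderiv ℝ g (x t) (y t), l t⟫ - ⟪g (x t), z t⟫)) 0 := by
  have hgc : Continuous g := hg.continuous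
  have hg' : Continuous (fderiv ℝ g) := hg.continuous_fderiv one_ne_zero
  have hF : ∀ ε : ℝ, Continuous fun t =>
      lagrangian g (x t + ε • y t) (p t + ε • p' t) (l t + ε • z t) := by
    intro ε
    unfold lagrangian
    fun_prop
  have hF' : Continuous (Function.uncurry fun (ε t : ℝ) => ⟪p t + ε • p' t, p' t⟫
      - ⟪fderiv ℝ g (x t + ε • y t) (y t), l t + ε • z t⟫ - ⟪g (x t + ε • y t), z t⟫) := by
    fun_prop
  simpa using hasDerivAt_intervalIntegral_of_continuous (x₀ := 0) hF hF'
    fun ε t => hasDerivAt_lagrangian_add_smul (hg.differentiable one_ne_zero) _ _ _ _ _ _ ε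

end InnerProductSpace

theorem Sbar_add_smul {n m : ℕ} (g : EuclideanSpace ℝ (Fin n) → EuclideanSpace ℝ (Fin m))
    {q v : ℝ → EuclideanSpace ℝ (Fin n)} (lam w : ℝ → EuclideanSpace ℝ (Fin m))
    (hq : Differentiable ℝ q) (hv : Differentiable ℝ v) (ε : ℝ) :
    Sbar g (fun t => q t + ε • v t) (fun t => lam t + ε • w t) =
      ∫ t in (0:ℝ)..1,
        lagrangian g (q t + ε • v t) (deriv q t + ε • deriv v t) (lam t + ε • w t) := by
  have hderiv : ∀ t, deriv (fun t => q t + ε • v t) t = deriv q t + ε • deriv v t :=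
    fun t => ((hq t).hasDerivAt.add ((hv t).hasDerivAt.const_smul ε)).deriv
  simp only [Sbar, lagrangian, hderiv]

/-- First variation of the extended functional `S̄`:
for smooth `g`, `q`, `λ` and every smooth variation `(v, w)` with `v 0 = 0 = v 1`,
the derivative at `ε = 0` of `ε ↦ S̄(q + εv, λ + εw)` exists and equals
`∫₀¹ ( −⟨q̈(t) + g'(q(t))ᵀ λ(t), v(t)⟩ − ⟨g(q(t)), w(t)⟩ ) dt`. -/
theorem first_variation_of_extended_functional {n m : ℕ}
    (g : EuclideanSpace ℝ (Fin n) → EuclideanSpace ℝ (Fin m))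
    (hg : ContDiff ℝ (⊤ : ℕ∞) g)
    (q : ℝ → EuclideanSpace ℝ (Fin n)) (lam : ℝ → EuclideanSpace ℝ (Fin m))
    (hq : ContDiff ℝ (⊤ : ℕ∞) q) (hlam : ContDiff ℝ (⊤ : ℕ∞) lam)
    (v : ℝ → EuclideanSpace ℝ (Fin n)) (w : ℝ → EuclideanSpace ℝ (Fin m))
    (hv : ContDiff ℝ (⊤ : ℕ∞) v) (hw : ContDiff ℝ (⊤ : ℕ∞) w)
    (hv0 : v 0 = 0) (hv1 : v 1 = 0) :
    HasDerivAt
      (fun ε : ℝ => Sbar g (fun t => q t + ε • v t) (fun t => lam t + ε • w t))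
      (∫ t in (0:ℝ)..1,
        (-⟪deriv (deriv q) t + (ContinuousLinearMap.adjoint (fderiv ℝ g (q t))) (lam t), v t⟫
          - ⟪g (q t), w t⟫))
      0 := by
  obtain ⟨hq_diff, hq'⟩ := contDiff_infty_iff_deriv.mp hq
  obtain ⟨hv_diff, hv'⟩ := contDiff_infty_iff_deriv.mp hv
  have hq'' : Continuous (deriv (deriv q)) := (contDiff_infty_iff_deriv.mp hq').2.continuous
  have hvar := hasDerivAt_integral_lagrangian_add_smul (hg.of_le (by simp)) hq.continuous
    hv.continuous hq'.continuous hv'.continuous hlam.continuous hw.continuous 0 1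
  simp only [← Sbar_add_smul g lam w hq_diff hv_diff] at hvar
  convert hvar using 1
  have hibp := integral_deriv_inner_eq_sub (a := 0) (b := 1)
    (fun t => (hq'.differentiable (by simp) t).hasDerivAt)
    (fun t => (hv_diff t).hasDerivAt) hq'' hv'.continuous
  rw [hv0, hv1, inner_zero_right, inner_zero_right, sub_zero] at hibp
  have hpointwise : ∀ t,
      -⟪deriv (deriv q) t + (ContinuousLinearMap.adjoint (fderiv ℝ g (q t))) (lam t), v t⟫
        - ⟪g (q t), w t⟫ =
      (⟪deriv q t, deriv v t⟫ - ⟪fderiv ℝ g (q t) (v t), lam t⟫ - ⟪g (q t), w t⟫)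
        - (⟪deriv (deriv q) t, v t⟫ + ⟪deriv q t, deriv v t⟫) := by
    intro t
    rw [inner_add_left, ContinuousLinearMap.adjoint_inner_left, real_inner_comm (lam t)]
    ring
  have hg' := hg.continuous_fderiv (by simp)
  have hgc := hg.continuous
  simp_rw [hpointwise]
  rw [intervalIntegral.integral_sub (Continuous.intervalIntegrable (by fun_prop) 0 1)
    (Continuous.intervalIntegrable (by fun_prop) 0 1), hibp, sub_zero]
end

section
/- Let g : ℝⁿ → ℝᵐ be smooth, let q₀, q_N ∈ ℝⁿ, and let q : [0,1] → ℝⁿ, λ : [0,1] → ℝᵐ be smooth with q(0) = q₀ and q(1) = q_N. Then the following are equivalent: (i) for every smooth v : [0,1] → ℝⁿ with v(0) = 0 = v(1) and every smooth w : [0,1] → ℝᵐ, the derivative at ε = 0 of ε ↦ S̄(q + εv, λ + εw) vanishes; (ii) q̈(t) = −g'(q(t))ᵀ λ(t) and g(q(t)) = 0 for all t ∈ [0,1]. -/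
/-
Differentiating under the integral sign, the first variation of `S̄` at `(q, λ)` in the
direction `(v, w)` is `∫₀¹ ⟨q̇, v̇⟩ - ⟨g'(q) v, λ⟩ - ⟨g(q), w⟩`; since `v` vanishes at the
endpoints, an integration by parts turns it into `-∫₀¹ ⟨q̈ + g'(q)ᵀλ, v⟩ + ⟨g(q), w⟩`. This
vanishes when (ii) holds. Conversely, a smooth `F` with `∫₀¹ ⟨F, v⟩ = 0` for all admissible `v`
vanishes: test against `v = t (1 - t) F`, whose integrand `t (1 - t) ‖F‖²` is continuous and
nonnegative. Applied with `w = 0` and with `v = 0` this gives both equations of (ii).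
-/

open scoped RealInnerProductSpace ContDiff
open MeasureTheory Set

section

variable {E : Type*} [NormedAddCommGroup E] [InnerProductSpace ℝ E]

lemma eqOn_zero_of_intervalIntegral_eq_zero_of_nonneg {f : ℝ → ℝ} {a b : ℝ} (hab : a < b)
    (hf : ContinuousOn f (Icc a b)) (hf_nonneg : ∀ t ∈ Icc a b, 0 ≤ f t)
    (hf_int : ∫ t in a..b, f t = 0) : EqOn f 0 (Icc a b) := by
  have hnonneg : 0 ≤ᵐ[volume.restrict (Ioc a b)] f :=
    (ae_restrict_iff' measurableSet_Ioc).2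
      (.of_forall fun t ht => hf_nonneg t (Ioc_subset_Icc_self ht))
  have hae := (intervalIntegral.integral_eq_zero_iff_of_le_of_nonneg_ae hab.le hnonneg
    (hf.intervalIntegrable_of_Icc hab.le)).1 hf_int
  rw [Measure.restrict_congr_set Ioc_ae_eq_Icc] at hae
  exact Measure.eqOn_Icc_of_ae_eq volume hab.ne hae hf continuousOn_const

lemma eqOn_zero_of_forall_integral_inner_eq_zero {F : ℝ → E} {a b : ℝ} (hab : a < b)
    (hF : ContDiff ℝ ∞ F)
    (h : ∀ v : ℝ → E, ContDiff ℝ ∞ v → v a = 0 → v b = 0 → ∫ t in a..b, ⟪F t, v t⟫ = 0) :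
    EqOn F 0 (Icc a b) := by
  set φ : ℝ → ℝ := fun t => (t - a) * (b - t)
  have hφ : ContDiff ℝ ∞ φ := by fun_prop
  have hweighted : EqOn (fun t => φ t * ‖F t‖ ^ 2) 0 (Icc a b) := by
    refine eqOn_zero_of_intervalIntegral_eq_zero_of_nonneg hab
      (hφ.continuous.mul (hF.continuous.norm.pow 2)).continuousOn
      (fun t ht => mul_nonneg (mul_nonneg (sub_nonneg.2 ht.1) (sub_nonneg.2 ht.2)) (sq_nonneg _))
      ?_
    simpa [φ, real_inner_smul_right, real_inner_self_eq_norm_sq] using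
      h (fun t => φ t • F t) (hφ.smul hF) (by simp [φ]) (by simp [φ])
  have hIoo : EqOn F 0 (Ioo a b) := fun t ht => by
    have hφt : φ t ≠ 0 := (mul_pos (sub_pos.2 ht.1) (sub_pos.2 ht.2)).ne'
    simpa [hφt] using hweighted (Ioo_subset_Icc_self ht)
  exact hIoo.of_subset_closure hF.continuous.continuousOn continuousOn_const Ioo_subset_Icc_self
    (closure_Ioo hab.ne).ge

lemma integral_inner_deriv_eq_neg {q v : ℝ → E} {a b : ℝ} (hq : ContDiff ℝ 2 q)
    (hv : ContDiff ℝ 1 v) (hva : v a = 0) (hvb : v b = 0) :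
    ∫ t in a..b, ⟪deriv q t, deriv v t⟫ = -∫ t in a..b, ⟪deriv (deriv q) t, v t⟫ := by
  have hq' : ContDiff ℝ 1 (deriv q) := hq.deriv'
  have hprod : ∀ t, HasDerivAt (fun s => ⟪deriv q s, v s⟫)
      (⟪deriv q t, deriv v t⟫ + ⟪deriv (deriv q) t, v t⟫) t := fun t =>
    (hq'.differentiable one_ne_zero t).hasDerivAt.inner ℝ
      (hv.differentiable one_ne_zero t).hasDerivAt
  have hcont₁ : Continuous fun t => ⟪deriv q t, deriv v t⟫ :=
    hq'.continuous.inner (hv.continuous_deriv le_rfl)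
  have hcont₂ : Continuous fun t => ⟪deriv (deriv q) t, v t⟫ :=
    (hq'.continuous_deriv le_rfl).inner hv.continuous
  have hftc := intervalIntegral.integral_eq_sub_of_hasDerivAt (fun t _ => hprod t)
    ((hcont₁.add hcont₂).intervalIntegrable a b)
  rw [intervalIntegral.integral_add (hcont₁.intervalIntegrable a b)
    (hcont₂.intervalIntegrable a b), hva, hvb, inner_zero_right, inner_zero_right, sub_zero] at hftc
  linarith

lemma hasDerivAt_intervalIntegral_of_continuous_deriv {G : Type*} [NormedAddCommGroup G]
    [NormedSpace ℝ G] {F F' : ℝ → ℝ → G} {a b x₀ : ℝ}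
    (hF : ∀ x, Continuous (F x)) (hF' : Continuous (Function.uncurry F'))
    (hderiv : ∀ x t, HasDerivAt (fun x => F x t) (F' x t) x) :
    HasDerivAt (fun x => ∫ t in a..b, F x t) (∫ t in a..b, F' x₀ t) x₀ := by
  obtain ⟨C, hC⟩ := ((isCompact_closedBall x₀ 1).prod (isCompact_uIcc (a := a) (b := b))
    ).exists_bound_of_continuousOn hF'.continuousOn
  refine (intervalIntegral.hasDerivAt_integral_of_dominated_loc_of_deriv_le
    (bound := fun _ => C) (Metric.closedBall_mem_nhds x₀ one_pos)
    (.of_forall fun x => (hF x).aestronglyMeasurable) ((hF x₀).intervalIntegrable a b)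
    (hF'.comp (Continuous.prodMk_right x₀)).aestronglyMeasurable
    (.of_forall fun t ht x hx => hC (x, t) ⟨hx, uIoc_subset_uIcc ht⟩)
    intervalIntegrable_const (.of_forall fun t _ x _ => hderiv x t)).2

lemma hasDerivAt_add_smul {G : Type*} [NormedAddCommGroup G] [NormedSpace ℝ G] (y y' : G)
    (ε : ℝ) :
    HasDerivAt (fun ε : ℝ => y + ε • y') y' ε := by
  simpa using ((hasDerivAt_id ε).smul_const y').const_add y

variable {F : Type*} [NormedAddCommGroup F] [InnerProductSpace ℝ F]

lemma hasDerivAt_lagrangian_line {g : E → F} (hg : Differentiable ℝ g) (p p' x x' : E)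
    (μ μ' : F) (ε : ℝ) :
    HasDerivAt (fun ε : ℝ => 1 / 2 * ‖p + ε • p'‖ ^ 2 - ⟪g (x + ε • x'), μ + ε • μ'⟫)
      (⟪p + ε • p', p'⟫ - (⟪fderiv ℝ g (x + ε • x') x', μ + ε • μ'⟫ + ⟪g (x + ε • x'), μ'⟫))
      ε := by
  have hkin := ((hasDerivAt_add_smul p p' ε).norm_sq).const_mul (1 / 2 : ℝ)
  have hpot := ((hg _).hasFDerivAt.comp_hasDerivAt ε (hasDerivAt_add_smul x x' ε)).inner ℝ
    (hasDerivAt_add_smul μ μ' ε)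
  refine (hkin.sub hpot).congr_deriv ?_
  simp only [Function.comp_apply]
  ring

lemma contDiff_adjoint [CompleteSpace E] [CompleteSpace F] {n : WithTop ℕ∞} :
    ContDiff ℝ n fun A : E →L[ℝ] F => ContinuousLinearMap.adjoint A := by
  -- `adjoint` is bundled as a `starRingEnd ℝ`-semilinear map; Mazur–Ulam makes it `ℝ`-linear.
  let adjoint := ContinuousLinearMap.adjoint (𝕜 := ℝ) (E := E) (F := F)
  exact (adjoint.toIsometryEquiv.toRealLinearIsometryEquivOfMapZero (map_zero adjoint)).contDiff

end

lemma hasDerivAt_Sbar {n m : ℕ} {g : EuclideanSpace ℝ (Fin n) → EuclideanSpace ℝ (Fin m)}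
    {q v : ℝ → EuclideanSpace ℝ (Fin n)} {lam w : ℝ → EuclideanSpace ℝ (Fin m)}
    (hg : ContDiff ℝ 1 g) (hq : ContDiff ℝ 1 q) (hv : ContDiff ℝ 1 v)
    (hlam : Continuous lam) (hw : Continuous w) :
    HasDerivAt (fun ε : ℝ => Sbar g (fun t => q t + ε • v t) (fun t => lam t + ε • w t))
      (∫ t in (0:ℝ)..1, (⟪deriv q t, deriv v t⟫ - (⟪fderiv ℝ g (q t) (v t), lam t⟫
        + ⟪g (q t), w t⟫))) 0 := by
  have hq' := hq.continuous_deriv le_rfl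
  have hv' := hv.continuous_deriv le_rfl
  have hg' := hg.continuous_fderiv one_ne_zero
  have hg₀ := hg.continuous
  have hq₀ := hq.continuous
  have hv₀ := hv.continuous
  have hderiv : ∀ ε t : ℝ, deriv (fun s => q s + ε • v s) t = deriv q t + ε • deriv v t :=
    fun ε t =>
      ((hq.differentiable one_ne_zero t).hasDerivAt.fun_add
        ((hv.differentiable one_ne_zero t).hasDerivAt.fun_const_smul ε)).deriv
  simp only [Sbar, hderiv]
  simpa using hasDerivAt_intervalIntegral_of_continuous_deriv (x₀ := 0)
    (fun ε => by fun_prop) (by fun_prop)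
    (fun ε t => hasDerivAt_lagrangian_line (hg.differentiable one_ne_zero)
      (deriv q t) (deriv v t) (q t) (v t) (lam t) (w t) ε)

lemma hasDerivAt_Sbar_of_endpoints_eq_zero {n m : ℕ}
    {g : EuclideanSpace ℝ (Fin n) → EuclideanSpace ℝ (Fin m)}
    {q v : ℝ → EuclideanSpace ℝ (Fin n)} {lam w : ℝ → EuclideanSpace ℝ (Fin m)}
    (hg : ContDiff ℝ 1 g) (hq : ContDiff ℝ 2 q) (hv : ContDiff ℝ 1 v)
    (hlam : Continuous lam) (hw : Continuous w) (hv0 : v 0 = 0) (hv1 : v 1 = 0) :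
    HasDerivAt (fun ε : ℝ => Sbar g (fun t => q t + ε • v t) (fun t => lam t + ε • w t))
      (-∫ t in (0:ℝ)..1, (⟪deriv (deriv q) t
        + ContinuousLinearMap.adjoint (fderiv ℝ g (q t)) (lam t), v t⟫ + ⟪g (q t), w t⟫)) 0 := by
  have hq₁ : ContDiff ℝ 1 (deriv q) := hq.deriv'
  have hq' := hq₁.continuous
  have hq'' := hq₁.continuous_deriv le_rfl
  have hg' := hg.continuous_fderiv one_ne_zero
  have hadj := (contDiff_adjoint (E := EuclideanSpace ℝ (Fin n)) (F := EuclideanSpace ℝ (Fin m))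
    (n := 0)).continuous
  have hg₀ := hg.continuous
  have hq₀ := hq.continuous
  have hv₀ := hv.continuous
  have hv' := hv.continuous_deriv le_rfl
  have hadjoint : ∀ t, ⟪fderiv ℝ g (q t) (v t), lam t⟫
      = ⟪ContinuousLinearMap.adjoint (fderiv ℝ g (q t)) (lam t), v t⟫ := fun t => by
    rw [ContinuousLinearMap.adjoint_inner_left, real_inner_comm]
  refine (hasDerivAt_Sbar hg (hq.of_le one_le_two) hv hlam hw).congr_deriv ?_
  simp only [hadjoint, inner_add_left, add_assoc]
  have hint : ∀ {f : ℝ → ℝ}, Continuous f → IntervalIntegrable f volume 0 1 :=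
    fun hf => hf.intervalIntegrable 0 1
  rw [intervalIntegral.integral_sub (hint (by fun_prop)) (hint (by fun_prop)),
    intervalIntegral.integral_add (f := fun t => ⟪deriv (deriv q) t, v t⟫) (hint (by fun_prop))
      (hint (by fun_prop)),
    integral_inner_deriv_eq_neg hq hv hv0 hv1]
  ring

theorem stationary_iff_constrained_EulerLagrange_general {n m : ℕ}
    (g : EuclideanSpace ℝ (Fin n) → EuclideanSpace ℝ (Fin m))
    (hg : ContDiff ℝ (⊤ : ℕ∞) g)
    (q : ℝ → EuclideanSpace ℝ (Fin n)) (lam : ℝ → EuclideanSpace ℝ (Fin m))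
    (hq : ContDiff ℝ (⊤ : ℕ∞) q) (hlam : ContDiff ℝ (⊤ : ℕ∞) lam) :
    (∀ (v : ℝ → EuclideanSpace ℝ (Fin n)) (w : ℝ → EuclideanSpace ℝ (Fin m)),
        ContDiff ℝ (⊤ : ℕ∞) v → ContDiff ℝ (⊤ : ℕ∞) w → v 0 = 0 → v 1 = 0 →
        HasDerivAt
          (fun ε : ℝ => Sbar g (fun t => q t + ε • v t) (fun t => lam t + ε • w t)) 0 0)
      ↔
    (∀ t ∈ Set.Icc (0:ℝ) 1,
        deriv (deriv q) t = -(ContinuousLinearMap.adjoint (fderiv ℝ g (q t))) (lam t)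
          ∧ g (q t) = 0) := by
  have hvar := fun v w (hv : ContDiff ℝ ∞ v) (hw : ContDiff ℝ ∞ w) hv0 hv1 =>
    hasDerivAt_Sbar_of_endpoints_eq_zero (g := g) (lam := lam) (contDiff_infty.1 hg 1)
      (contDiff_infty.1 hq 2) (contDiff_infty.1 hv 1) hlam.continuous hw.continuous hv0 hv1
  set residual := fun t =>
    deriv (deriv q) t + ContinuousLinearMap.adjoint (fderiv ℝ g (q t)) (lam t)
  constructor
  · intro hstat
    have hzero : ∀ v w, ContDiff ℝ ∞ v → ContDiff ℝ ∞ w → v 0 = 0 → v 1 = 0 →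
        ∫ t in (0:ℝ)..1, (⟪residual t, v t⟫ + ⟪g (q t), w t⟫) = 0 := fun v w hv hw hv0 hv1 =>
      neg_eq_zero.1 ((hvar v w hv hw hv0 hv1).unique (hstat v w hv hw hv0 hv1))
    have hresidual : ContDiff ℝ ∞ residual :=
      (contDiff_infty_iff_deriv.1 (contDiff_infty_iff_deriv.1 hq).2).2.add
        ((contDiff_adjoint.comp ((hg.fderiv_right le_rfl).comp hq)).clm_apply hlam)
    have hEL := eqOn_zero_of_forall_integral_inner_eq_zero zero_lt_one hresidual
      fun v hv hv0 hv1 => by simpa using hzero v 0 hv contDiff_const hv0 hv1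
    have hconstraint := eqOn_zero_of_forall_integral_inner_eq_zero zero_lt_one (hg.comp hq)
      fun w hw _ _ => by simpa using hzero 0 w contDiff_const hw rfl rfl
    exact fun t ht => ⟨eq_neg_of_add_eq_zero_left (hEL ht), hconstraint ht⟩
  · intro hEL v w hv hw hv0 hv1
    convert hvar v w hv hw hv0 hv1 using 1
    rw [intervalIntegral.integral_congr (g := 0) fun t ht => ?_]
    · simp
    obtain ⟨hEL, hconstraint⟩ := hEL t (by rwa [uIcc_of_le zero_le_one] at ht)
    simp [hEL, hconstraint]

/-- A smooth pair `(q, λ)` with boundary conditions `q 0 = q₀`, `q 1 = q_N` is a stationary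
point of the extended functional `S̄` (i.e. the first variation vanishes for all smooth
variations `(v, w)` with `v 0 = 0 = v 1`) if and only if the constrained Euler–Lagrange
equations `q̈ = −g'(q)ᵀ λ` and `g(q) = 0` hold on `[0,1]`. -/
theorem stationary_iff_constrained_EulerLagrange {n m : ℕ}
    (g : EuclideanSpace ℝ (Fin n) → EuclideanSpace ℝ (Fin m))
    (hg : ContDiff ℝ (⊤ : ℕ∞) g)
    (q₀ qN : EuclideanSpace ℝ (Fin n))
    (q : ℝ → EuclideanSpace ℝ (Fin n)) (lam : ℝ → EuclideanSpace ℝ (Fin m))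
    (hq : ContDiff ℝ (⊤ : ℕ∞) q) (hlam : ContDiff ℝ (⊤ : ℕ∞) lam)
    (hq0 : q 0 = q₀) (hq1 : q 1 = qN) :
    (∀ (v : ℝ → EuclideanSpace ℝ (Fin n)) (w : ℝ → EuclideanSpace ℝ (Fin m)),
        ContDiff ℝ (⊤ : ℕ∞) v → ContDiff ℝ (⊤ : ℕ∞) w → v 0 = 0 → v 1 = 0 →
        HasDerivAt
          (fun ε : ℝ => Sbar g (fun t => q t + ε • v t) (fun t => lam t + ε • w t)) 0 0)
      ↔
    (∀ t ∈ Set.Icc (0:ℝ) 1,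
        deriv (deriv q) t = -(ContinuousLinearMap.adjoint (fderiv ℝ g (q t))) (lam t)
          ∧ g (q t) = 0) :=
  stationary_iff_constrained_EulerLagrange_general g hg q lam hq hlam
end

section
/- Let g : ℝⁿ → ℝᵐ be smooth, Δt > 0, and N ≥ 2. Suppose sequences (q_k)_{k=0}^{N} in ℝⁿ, (u_k)_{k=0}^{N−1} in ℝⁿ, (μ_k)_{k=0}^{N−1} in ℝⁿ, and (λ_k)_{k=1}^{N−1} in ℝᵐ satisfy the discrete Karush–Kuhn–Tucker conditions: q_{k+1} − q_k − Δt u_k = 0 for all k ∈ {0,…,N−1}, u_k − Δt μ_k = 0 for all k ∈ {0,…,N−1}, and −g'(q_k)ᵀ λ_k − μ_k + μ_{k−1} = 0 together with g(q_k) = 0 for all k ∈ {1,…,N−1}. Then μ_k = (q_{k+1} − q_k)/Δt² for all k ∈ {0,…,N−1}, and the pair of sequences (q_k), (λ_k) satisfies the discrete Euler–Lagrange equations (q_{k+1} − 2q_k + q_{k−1})/Δt + Δt g'(q_k)ᵀ λ_k = 0 and g(q_k) = 0 for all k ∈ {1,…,N−1}. -/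
section ExplicitEuler

variable {K E : Type*} [Field K] [AddCommGroup E] [Module K E] {h : K}

theorem eq_inv_sq_smul_sub_of_euler_step (hh : h ≠ 0) {x y u μ : E}
    (hstate : y - x - h • u = 0) (hcontrol : u - h • μ = 0) :
    μ = (h ^ 2)⁻¹ • (y - x) := by
  have hu : u = h • μ := sub_eq_zero.mp hcontrol
  have hstep : y - x = (h ^ 2) • μ := by
    rw [sub_eq_zero.mp hstate, hu, smul_smul, sq]
  rw [hstep, smul_smul, inv_mul_cancel₀ (pow_ne_zero 2 hh), one_smul]

theorem inv_smul_second_diff_add_smul_eq_zero (hh : h ≠ 0) {x y z a μ ν : E}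
    (hμ : μ = (h ^ 2)⁻¹ • (z - y)) (hν : ν = (h ^ 2)⁻¹ • (y - x))
    (hadjoint : -a - μ + ν = 0) :
    h⁻¹ • (z - (2 : K) • y + x) + h • a = 0 := by
  have ha : a = ν - μ := by linear_combination (norm := module) -hadjoint
  rw [ha, hμ, hν]
  match_scalars <;> field_simp <;> ring

end ExplicitEuler

theorem discrete_KKT_implies_discrete_EL_general {n m : ℕ}
    (g : EuclideanSpace ℝ (Fin n) → EuclideanSpace ℝ (Fin m))
    (Δt : ℝ) (hΔt : 0 < Δt) (N : ℕ)
    (q u μ : ℕ → EuclideanSpace ℝ (Fin n)) (lam : ℕ → EuclideanSpace ℝ (Fin m))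
    (hstate : ∀ k ≤ N - 1, q (k + 1) - q k - Δt • u k = 0)
    (hcontrol : ∀ k ≤ N - 1, u k - Δt • μ k = 0)
    (hadjoint : ∀ k ∈ Finset.Icc 1 (N - 1),
      -(ContinuousLinearMap.adjoint (fderiv ℝ g (q k))) (lam k) - μ k + μ (k - 1) = 0)
    (hconstraint : ∀ k ∈ Finset.Icc 1 (N - 1), g (q k) = 0) :
    (∀ k ≤ N - 1, μ k = (Δt ^ 2)⁻¹ • (q (k + 1) - q k)) ∧
    (∀ k ∈ Finset.Icc 1 (N - 1),
      Δt⁻¹ • (q (k + 1) - (2:ℝ) • q k + q (k - 1))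
        + Δt • (ContinuousLinearMap.adjoint (fderiv ℝ g (q k))) (lam k) = 0 ∧
      g (q k) = 0) := by
  have hμ : ∀ k ≤ N - 1, μ k = (Δt ^ 2)⁻¹ • (q (k + 1) - q k) := fun k hk =>
    eq_inv_sq_smul_sub_of_euler_step hΔt.ne' (hstate k hk) (hcontrol k hk)
  refine ⟨hμ, fun k hk => ⟨?_, hconstraint k hk⟩⟩
  obtain ⟨hk1, hk2⟩ := Finset.mem_Icc.mp hk
  have hprev := hμ (k - 1) (by omega)
  rw [Nat.sub_add_cancel hk1] at hprev
  exact inv_smul_second_diff_add_smul_eq_zero hΔt.ne' (hμ k hk2) hprev (hadjoint k hk)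

/-- The direct (KKT) discretisation recovers the discrete Euler–Lagrange scheme:
if `q_{k+1} − q_k − Δt u_k = 0` and `u_k − Δt μ_k = 0` for `k ∈ {0,…,N−1}`, and
`−g'(q_k)ᵀ λ_k − μ_k + μ_{k−1} = 0`, `g(q_k) = 0` for `k ∈ {1,…,N−1}`, then
`μ_k = (q_{k+1} − q_k)/Δt²` for `k ∈ {0,…,N−1}` and `(q_k)`, `(λ_k)` satisfy the discrete
Euler–Lagrange equations `(q_{k+1} − 2q_k + q_{k−1})/Δt + Δt g'(q_k)ᵀ λ_k = 0`,
`g(q_k) = 0` for `k ∈ {1,…,N−1}`. -/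
theorem discrete_KKT_implies_discrete_EL {n m : ℕ}
    (g : EuclideanSpace ℝ (Fin n) → EuclideanSpace ℝ (Fin m))
    (hg : ContDiff ℝ (⊤ : ℕ∞) g)
    (Δt : ℝ) (hΔt : 0 < Δt) (N : ℕ) (hN : 2 ≤ N)
    (q u μ : ℕ → EuclideanSpace ℝ (Fin n)) (lam : ℕ → EuclideanSpace ℝ (Fin m))
    (hstate : ∀ k ≤ N - 1, q (k + 1) - q k - Δt • u k = 0)
    (hcontrol : ∀ k ≤ N - 1, u k - Δt • μ k = 0)
    (hadjoint : ∀ k ∈ Finset.Icc 1 (N - 1),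
      -(ContinuousLinearMap.adjoint (fderiv ℝ g (q k))) (lam k) - μ k + μ (k - 1) = 0)
    (hconstraint : ∀ k ∈ Finset.Icc 1 (N - 1), g (q k) = 0) :
    (∀ k ≤ N - 1, μ k = (Δt ^ 2)⁻¹ • (q (k + 1) - q k)) ∧
    (∀ k ∈ Finset.Icc 1 (N - 1),
      Δt⁻¹ • (q (k + 1) - (2:ℝ) • q k + q (k - 1))
        + Δt • (ContinuousLinearMap.adjoint (fderiv ℝ g (q k))) (lam k) = 0 ∧
      g (q k) = 0) :=
  discrete_KKT_implies_discrete_EL_general g Δt hΔt N q u μ lam hstate hcontrol hadjoint hconstraint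
end
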